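/- Let a, b, c, d ∈ ℂ and define H_VI(x,u,v) = (1/(x(x−1)))·[u(u−1)(u−x)v² − (a(u−1)(u−x) + bu(u−x) + (c−1)u(u−1))v + (1/4)((a+b+c−1)² − d²)(u−x)]. Then there exist complex numbers α, β, γ, δ (depending only on a, b, c, d) such that for every open set Ω ⊆ ℂ and all differentiable functions u, v : Ω → ℂ with x ≠ 0, x ≠ 1, u(x) ≠ 0, u(x) ≠ 1 and u(x) ≠ x for all x ∈ Ω, if u'(x) = (∂H_VI/∂v)(x,u(x),v(x)) and v'(x) = −(∂H_VI/∂u)(x,u(x),v(x)) for all x ∈ Ω, then u''(x) = (1/2)(1/u + 1/(u−1) + 1/(u−x))u'² − (1/x + 1/(x−1) + 1/(u−x))u' + [u(u−1)(u−x)/(x²(x−1)²)]·(α + βx/u² + γ(x−1)/(u−1)² + δx(x−1)/(u−x)²) for all x ∈ Ω (with u, u' evaluated at x). -/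

import Mathlib

/-- The Okamoto Hamiltonian of the sixth Painlevé equation:
`H_VI(x,u,v) = (1/(x(x−1)))·[u(u−1)(u−x)v² − (a(u−1)(u−x) + bu(u−x) + (c−1)u(u−1))v
  + (1/4)((a+b+c−1)² − d²)(u−x)]`. -/
noncomputable def HVI (a b c d x u v : ℂ) : ℂ :=
  (1 / (x * (x - 1))) * (u * (u - 1) * (u - x) * v ^ 2
    - (a * (u - 1) * (u - x) + b * u * (u - x) + (c - 1) * u * (u - 1)) * v
    + (1 / 4) * ((a + b + c - 1) ^ 2 - d ^ 2) * (u - x))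

/-!
Differentiating `u' = ∂H/∂v` once more along the flow gives
`u'' = ∂ₓ(∂H/∂v) + ∂ᵤ(∂H/∂v) u' − ∂ᵥ(∂H/∂v) ∂H/∂u`. Since `∂H/∂v` is affine in `v` with leading
coefficient `2u(u−1)(u−x)/(x(x−1))`, one can solve `u' = ∂H/∂v` for `v`; substituting, the
right-hand side becomes a rational function of `x, u, u'` alone, and it is the Painlevé VI
right-hand side with `(α, β, γ, δ) = (d²/2, −a²/2, b²/2, (1 − c²)/2)`.
-/

noncomputable def HVI_dv (a b c x u v : ℂ) : ℂ :=
  (x * (x - 1))⁻¹ * (2 * u * (u - 1) * (u - x) * v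
    - (a * (u - 1) * (u - x) + b * u * (u - x) + (c - 1) * u * (u - 1)))

noncomputable def HVI_du (a b c d x u v : ℂ) : ℂ :=
  (x * (x - 1))⁻¹ * ((3 * u ^ 2 - 2 * (1 + x) * u + x) * v ^ 2
    - (a * (2 * u - 1 - x) + b * (2 * u - x) + (c - 1) * (2 * u - 1)) * v
    + (1 / 4) * ((a + b + c - 1) ^ 2 - d ^ 2))

noncomputable def painleveVIRhs (α β γ δ x u u' : ℂ) : ℂ :=
  (1 / 2) * (1 / u + 1 / (u - 1) + 1 / (u - x)) * u' ^ 2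
    - (1 / x + 1 / (x - 1) + 1 / (u - x)) * u'
    + (u * (u - 1) * (u - x) / (x ^ 2 * (x - 1) ^ 2)) *
        (α + β * x / u ^ 2 + γ * (x - 1) / (u - 1) ^ 2 + δ * x * (x - 1) / (u - x) ^ 2)

open Filter Topology

theorem hasDerivAt_HVI_v (a b c d x u v : ℂ) :
    HasDerivAt (fun w => HVI a b c d x u w) (HVI_dv a b c x u v) v := by
  have h := ((((hasDerivAt_pow 2 v).const_mul (u * (u - 1) * (u - x))).fun_sub
    ((hasDerivAt_id' v).const_mul
      (a * (u - 1) * (u - x) + b * u * (u - x) + (c - 1) * u * (u - 1)))).add_const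
    ((1 / 4) * ((a + b + c - 1) ^ 2 - d ^ 2) * (u - x))).const_mul (1 / (x * (x - 1)))
  exact h.congr_deriv (by simp only [HVI_dv]; ring)

theorem hasDerivAt_HVI_u (a b c d x u v : ℂ) :
    HasDerivAt (fun w => HVI a b c d x w v) (HVI_du a b c d x u v) u := by
  have hid := hasDerivAt_id' u
  have h := (((((hid.fun_mul (hid.sub_const 1)).fun_mul (hid.sub_const x)).mul_const (v ^ 2)).fun_sub
    (((((hid.sub_const 1).fun_mul (hid.sub_const x)).const_mul a).fun_add
      ((hid.fun_mul (hid.sub_const x)).const_mul b)).fun_add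
        ((hid.fun_mul (hid.sub_const 1)).const_mul (c - 1)) |>.mul_const v)).fun_add
    ((hid.sub_const x).const_mul ((1 / 4) * ((a + b + c - 1) ^ 2 - d ^ 2)))).const_mul
      (1 / (x * (x - 1)))
  refine (h.congr_deriv ?_).congr_of_eventuallyEq (.of_forall fun w => ?_)
  · simp only [HVI_du]; ring
  · simp only [HVI]; ring

theorem hasDerivAt_HVI_dv_comp (a b c : ℂ) {p q : ℂ → ℂ} {p' q' x : ℂ} (hp : HasDerivAt p p' x)
    (hq : HasDerivAt q q' x) (hx : x * (x - 1) ≠ 0) :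
    HasDerivAt (fun y => HVI_dv a b c y (p y) (q y))
      ((x * (x - 1))⁻¹ * ((2 * (3 * p x ^ 2 - 2 * (1 + x) * p x + x) * q x
          - (a * (2 * p x - 1 - x) + b * (2 * p x - x) + (c - 1) * (2 * p x - 1))) * p'
        + 2 * p x * (p x - 1) * (p x - x) * q'
        + (a * (p x - 1) + b * p x - 2 * p x * (p x - 1) * q x))
        - (2 * x - 1) * (x * (x - 1))⁻¹ * HVI_dv a b c x (p x) (q x)) x := by
  have hid := hasDerivAt_id' x
  have hp1 := hp.sub_const 1
  have hpx := hp.fun_sub hid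
  have hN := ((((hp.const_mul 2).fun_mul hp1).fun_mul hpx).fun_mul hq).fun_sub
    ((((hp1.const_mul a).fun_mul hpx).fun_add ((hp.const_mul b).fun_mul hpx)).fun_add
      ((hp.const_mul (c - 1)).fun_mul hp1))
  refine (((hid.fun_mul (hid.sub_const 1)).fun_inv hx).fun_mul hN).congr_deriv ?_
  simp only [HVI_dv]
  field_simp
  ring

theorem hasDerivAt_HVI_dv_of_hamiltonian (a b c d : ℂ) {p q : ℂ → ℂ} {x : ℂ}
    (hp : HasDerivAt p (HVI_dv a b c x (p x) (q x)) x)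
    (hq : HasDerivAt q (-HVI_du a b c d x (p x) (q x)) x)
    (hx0 : x ≠ 0) (hx1 : x ≠ 1) (hp0 : p x ≠ 0) (hp1 : p x ≠ 1) (hpx : p x ≠ x) :
    HasDerivAt (fun y => HVI_dv a b c y (p y) (q y))
      (painleveVIRhs (d ^ 2 / 2) (-a ^ 2 / 2) (b ^ 2 / 2) ((1 - c ^ 2) / 2) x (p x)
        (HVI_dv a b c x (p x) (q x))) x := by
  have hx1' : x - 1 ≠ 0 := sub_ne_zero.mpr hx1
  have hp1' : p x - 1 ≠ 0 := sub_ne_zero.mpr hp1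
  have hpx' : p x - x ≠ 0 := sub_ne_zero.mpr hpx
  refine (hasDerivAt_HVI_dv_comp a b c hp hq (mul_ne_zero hx0 hx1')).congr_deriv ?_
  simp only [HVI_dv, HVI_du, painleveVIRhs]
  field_simp
  ring

/-- Painlevé VI admits a rational Hamiltonian form: there exist parameters `α β γ δ`
(depending only on `a b c d`) such that any solution `(u,v)` of the Hamiltonian system
`u' = ∂H_VI/∂v`, `v' = −∂H_VI/∂u` on an open set `Ω ⊆ ℂ` (with `x ≠ 0`, `x ≠ 1`,
`u ≠ 0`, `u ≠ 1`, `u ≠ x` on `Ω`) has `u` a solution of the sixth Painlevé equation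
`P_VI(α,β,γ,δ)`. -/
theorem stmt_10 (a b c d : ℂ) :
    ∃ α β γ δ : ℂ, ∀ (Ω : Set ℂ), IsOpen Ω → ∀ u v : ℂ → ℂ,
      (∀ x ∈ Ω, x ≠ 0) → (∀ x ∈ Ω, x ≠ 1) →
      (∀ x ∈ Ω, u x ≠ 0) → (∀ x ∈ Ω, u x ≠ 1) → (∀ x ∈ Ω, u x ≠ x) →
      (∀ x ∈ Ω, HasDerivAt u (deriv (fun w => HVI a b c d x (u x) w) (v x)) x) →
      (∀ x ∈ Ω, HasDerivAt v (-(deriv (fun w => HVI a b c d x w (v x)) (u x))) x) →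
      ∀ x ∈ Ω, deriv (deriv u) x =
        (1 / 2) * (1 / u x + 1 / (u x - 1) + 1 / (u x - x)) * (deriv u x) ^ 2
          - (1 / x + 1 / (x - 1) + 1 / (u x - x)) * deriv u x
          + (u x * (u x - 1) * (u x - x) / (x ^ 2 * (x - 1) ^ 2)) *
              (α + β * x / (u x) ^ 2 + γ * (x - 1) / (u x - 1) ^ 2
                + δ * x * (x - 1) / (u x - x) ^ 2) := by
  refine ⟨d ^ 2 / 2, -a ^ 2 / 2, b ^ 2 / 2, (1 - c ^ 2) / 2, ?_⟩
  intro Ω hΩ u v hx0 hx1 hu0 hu1 hux hu' hv' x hx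
  simp only [(hasDerivAt_HVI_v _ _ _ _ _ _ _).deriv] at hu'
  simp only [(hasDerivAt_HVI_u _ _ _ _ _ _ _).deriv] at hv'
  have hderiv : deriv u =ᶠ[𝓝 x] fun y => HVI_dv a b c y (u y) (v y) :=
    eventually_of_mem (hΩ.mem_nhds hx) fun y hy => (hu' y hy).deriv
  rw [hderiv.deriv_eq, (hu' x hx).deriv]
  exact (hasDerivAt_HVI_dv_of_hamiltonian a b c d (hu' x hx) (hv' x hx)
    (hx0 x hx) (hx1 x hx) (hu0 x hx) (hu1 x hx) (hux x hx)).deriv
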